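/- arXiv:1411.2017 — 4 statements merged into one kernel-verified Lean document; each statement's English description precedes it below -/
import Mathlib

section
/- For genotype space Σ² = {0,1}², define a fitness landscape w : Σ² → ℝ (injective on values at distinct genotypes). Define an edge from g to g' (adjacent genotypes, Hamming distance 1) to be ascending if w(g) < w(g'). Then there is no fitness landscape on Σ² satisfying all of: (A1) there is no ascending path from 00 to the global maximum g_max; (A2) there exist genotypes g¹, g² such that g_max's first bit equals g¹'s first bit and g_max's second bit equals g²'s second bit; (A3) for each k there is an ascending path from 00 to g^k; (A4) each g^k is a local peak (all Hamming neighbors have strictly lower fitness). -/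
/-- Two genotypes are adjacent iff they differ in exactly one position. -/
def Adj {L : ℕ} (g g' : Fin L → Bool) : Prop :=
  (Finset.univ.filter (fun i => g i ≠ g' i)).card = 1

/-- Strictly fitness-increasing path in the fitness graph. -/
def AscPath {L : ℕ} (w : (Fin L → Bool) → ℝ) : (Fin L → Bool) → (Fin L → Bool) → Prop :=
  Relation.ReflTransGen (fun g g' => Adj g g' ∧ w g < w g')

/-- A local peak is strictly fitter than all Hamming neighbors. -/
def LocalPeak {L : ℕ} (w : (Fin L → Bool) → ℝ) (g : Fin L → Bool) : Prop :=
  ∀ g', Adj g g' → w g' < w g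

/-- `c` is a possible recombinant of parents `a` and `b`. -/
def Recomb {L : ℕ} (c a b : Fin L → Bool) : Prop :=
  ∀ i, c i = a i ∨ c i = b i

/-! With two loci, the peak `g¹` shares its first bit with `g_max`, so it is either `g_max` itself,
which contradicts (A1) via (A3), or a Hamming neighbour of `g_max`, which cannot be a local peak. -/

theorem adj_of_ne_of_forall_ne_eq {L : ℕ} {g g' : Fin L → Bool} (i : Fin L) (hne : g ≠ g')
    (h : ∀ j, j ≠ i → g j = g' j) : Adj g g' := by
  have hi : g i ≠ g' i := fun hgi =>
    hne (funext fun j => if hj : j = i then hj ▸ hgi else h j hj)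
  refine Finset.card_eq_one.2 ⟨i, Finset.ext fun j => ?_⟩
  simp only [Finset.mem_filter, Finset.mem_univ, true_and, Finset.mem_singleton]
  exact ⟨not_imp_comm.1 (h j), fun hj => hj ▸ hi⟩

theorem adj_of_ne_of_apply_zero_eq {g g' : Fin 2 → Bool} (hne : g ≠ g') (h0 : g 0 = g' 0) :
    Adj g g' :=
  adj_of_ne_of_forall_ne_eq 1 hne fun j hj => by
    fin_cases j
    · exact h0
    · exact absurd rfl hj

theorem LocalPeak.not_adj_of_lt {L : ℕ} {w : (Fin L → Bool) → ℝ} {g g' : Fin L → Bool}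
    (hg : LocalPeak w g) (hlt : w g < w g') : ¬ Adj g g' :=
  fun hadj => (hg g' hadj).asymm hlt

theorem stmt2_general (w : (Fin 2 → Bool) → ℝ) :
    ¬ ∃ (gmax g1 g2 : Fin 2 → Bool),
      (∀ g, g ≠ gmax → w g < w gmax) ∧
      (¬ AscPath w ![false, false] gmax) ∧
      (gmax 0 = g1 0 ∧ gmax 1 = g2 1) ∧
      (AscPath w ![false, false] g1 ∧ AscPath w ![false, false] g2) ∧
      (LocalPeak w g1 ∧ LocalPeak w g2) := by
  rintro ⟨gmax, g1, -, hmax, hnoasc, ⟨hbit0, -⟩, ⟨hpath1, -⟩, ⟨hpeak1, -⟩⟩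
  by_cases heq : g1 = gmax
  · exact hnoasc (heq ▸ hpath1)
  · exact hpeak1.not_adj_of_lt (hmax g1 heq) (adj_of_ne_of_apply_zero_eq heq hbit0.symm)

theorem stmt2 (w : (Fin 2 → Bool) → ℝ) (hinj : Function.Injective w) :
    ¬ ∃ (gmax g1 g2 : Fin 2 → Bool),
      (∀ g, g ≠ gmax → w g < w gmax) ∧
      (¬ AscPath w ![false, false] gmax) ∧
      (gmax 0 = g1 0 ∧ gmax 1 = g2 1) ∧
      (AscPath w ![false, false] g1 ∧ AscPath w ![false, false] g2) ∧
      (LocalPeak w g1 ∧ LocalPeak w g2) :=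
  stmt2_general w
end

section
/- Define w : {0,1}⁴ → ℝ satisfying the Example 2 conditions: w(1000), w(0100), w(0010), w(0001) > w(0000); w(1100) > w(1000), w(0100); w(0011) > w(0010), w(0001); w(1111) > w(1100), w(0011); all genotypes in {1001, 1010, 0110, 0101, 1110, 1101, 1011, 0111} have fitness less than w(0000); and 1111 is the global maximum. Then there is no strictly increasing Hamming path from 0000 to 1111. -/
theorem AscPath.fitness_le {L : ℕ} {w : (Fin L → Bool) → ℝ} {g g' : Fin L → Bool}
    (h : AscPath w g g') : w g ≤ w g' := by
  induction h with
  | refl => exact le_rfl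
  | tail _ step ih => exact ih.trans step.2.le

theorem not_ascPath_of_forall_adj_lt {L : ℕ} {w : (Fin L → Bool) → ℝ} {g g' : Fin L → Bool}
    (hne : g ≠ g') (hnbr : ∀ h, Adj h g' → w h < w g) : ¬ AscPath w g g' := by
  intro hpath
  rcases hpath.cases_tail with rfl | ⟨h, hgh, hstep⟩
  · exact hne rfl
  · exact ((AscPath.fitness_le hgh).trans_lt (hnbr h hstep.1)).false

theorem eq_of_adj_1111 (g : Fin 4 → Bool) (h : Adj g ![true,true,true,true]) :
    g = ![false,true,true,true] ∨ g = ![true,false,true,true] ∨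
    g = ![true,true,false,true] ∨ g = ![true,true,true,false] := by
  revert g h; unfold Adj; decide

theorem stmt7_general (w : (Fin 4 → Bool) → ℝ)
    (hlow : ∀ g ∈ ({![true,false,false,true], ![true,false,true,false],
        ![false,true,true,false], ![false,true,false,true],
        ![true,true,true,false], ![true,true,false,true],
        ![true,false,true,true], ![false,true,true,true]} : Set (Fin 4 → Bool)),
      w g < w ![false,false,false,false]) :
    ¬ AscPath w ![false,false,false,false] ![true,true,true,true] := by
  refine not_ascPath_of_forall_adj_lt (by decide) fun g hg => hlow g ?_
  rcases eq_of_adj_1111 g hg with rfl | rfl | rfl | rfl <;> simp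

theorem stmt7 (w : (Fin 4 → Bool) → ℝ)
    (h1000 : w ![false,false,false,false] < w ![true,false,false,false])
    (h0100 : w ![false,false,false,false] < w ![false,true,false,false])
    (h0010 : w ![false,false,false,false] < w ![false,false,true,false])
    (h0001 : w ![false,false,false,false] < w ![false,false,false,true])
    (h1100a : w ![true,false,false,false] < w ![true,true,false,false])
    (h1100b : w ![false,true,false,false] < w ![true,true,false,false])
    (h0011a : w ![false,false,true,false] < w ![false,false,true,true])
    (h0011b : w ![false,false,false,true] < w ![false,false,true,true])
    (h1111a : w ![true,true,false,false] < w ![true,true,true,true])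
    (h1111b : w ![false,false,true,true] < w ![true,true,true,true])
    (hlow : ∀ g ∈ ({![true,false,false,true], ![true,false,true,false],
        ![false,true,true,false], ![false,true,false,true],
        ![true,true,true,false], ![true,true,false,true],
        ![true,false,true,true], ![false,true,true,true]} : Set (Fin 4 → Bool)),
      w g < w ![false,false,false,false])
    (hmax : ∀ g, g ≠ ![true,true,true,true] → w g < w ![true,true,true,true]) :
    ¬ AscPath w ![false,false,false,false] ![true,true,true,true] :=
  stmt7_general w hlow
end

section
/- If a sequence p_n ∈ (0,1) satisfies p_{n+1} ≥ C₁p_n/(C₁p_n + C₂(1-p_n)) for all n, where C₁ > C₂ > 0, then p_n → 1 as n → ∞. -/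
/-!
The odds ratio `(1 - p) / p` of the fittest genotype is multiplied by exactly `C₂ / C₁ < 1`
under the selection map `p ↦ C₁ p / (C₁ p + C₂ (1 - p))`, and it is antitone in `p`, so the
recursive inequality makes the odds decay at least geometrically. Since `p = 1 / (1 + odds)`,
the proportion tends to `1`.
-/

open Filter Topology

lemma odds_selection {C1 C2 x : ℝ} (hC1 : 0 < C1) (hC2 : 0 < C2) (hx : x ∈ Set.Ioc 0 1) :
    (1 - C1 * x / (C1 * x + C2 * (1 - x))) / (C1 * x / (C1 * x + C2 * (1 - x))) =
      C2 / C1 * ((1 - x) / x) := by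
  obtain ⟨hx0, hx1⟩ := hx
  have hD : 0 < C1 * x + C2 * (1 - x) := by nlinarith
  field_simp
  ring

lemma odds_antitone {a b : ℝ} (ha : 0 < a) (hab : a ≤ b) : (1 - b) / b ≤ (1 - a) / a := by
  rw [sub_div, sub_div, div_self ha.ne', div_self (ha.trans_le hab).ne']
  gcongr

lemma tendsto_zero_of_le_mul_self {q : ℕ → ℝ} {r : ℝ} (hr0 : 0 ≤ r) (hr1 : r < 1)
    (hq : ∀ n, 0 ≤ q n) (hstep : ∀ n, q (n + 1) ≤ r * q n) : Tendsto q atTop (𝓝 0) := by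
  have hgeom : Tendsto (fun n ↦ r ^ n * q 0) atTop (𝓝 0) := by
    simpa using (tendsto_pow_atTop_nhds_zero_of_lt_one hr0 hr1).mul_const (q 0)
  exact squeeze_zero hq (fun n ↦ le_geom hr0 n fun k _ ↦ hstep k) hgeom

lemma tendsto_one_of_odds_tendsto_zero {p : ℕ → ℝ} (hp : ∀ n, p n ≠ 0)
    (hodds : Tendsto (fun n ↦ (1 - p n) / p n) atTop (𝓝 0)) : Tendsto p atTop (𝓝 1) := by
  have hp_eq : ∀ n, p n = (1 + (1 - p n) / p n)⁻¹ := fun n ↦ by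
    field_simp [hp n]
    ring
  rw [funext hp_eq]
  simpa using (hodds.const_add 1).inv₀ (by norm_num)

theorem stmt13 (p : ℕ → ℝ) (C1 C2 : ℝ) (hC : C2 < C1) (hC2 : 0 < C2)
    (hmem : ∀ n, p n ∈ Set.Ioo (0 : ℝ) 1)
    (hrec : ∀ n, p (n + 1) ≥ C1 * p n / (C1 * p n + C2 * (1 - p n))) :
    Filter.Tendsto p Filter.atTop (nhds 1) := by
  have hC1 : 0 < C1 := hC2.trans hC
  have hselection_pos : ∀ n, 0 < C1 * p n / (C1 * p n + C2 * (1 - p n)) := fun n ↦ by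
    have := hmem n
    exact div_pos (mul_pos hC1 this.1) (by nlinarith [this.1, this.2])
  apply tendsto_one_of_odds_tendsto_zero fun n ↦ (hmem n).1.ne'
  refine tendsto_zero_of_le_mul_self (div_pos hC2 hC1).le ((div_lt_one hC1).mpr hC)
    (fun n ↦ div_nonneg (sub_nonneg.mpr (hmem n).2.le) (hmem n).1.le) fun n ↦ ?_
  calc (1 - p (n + 1)) / p (n + 1)
      ≤ (1 - C1 * p n / (C1 * p n + C2 * (1 - p n))) /
          (C1 * p n / (C1 * p n + C2 * (1 - p n))) := odds_antitone (hselection_pos n) (hrec n)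
    _ = C2 / C1 * ((1 - p n) / p n) := odds_selection hC1 hC2 (Set.Ioo_subset_Ioc_self (hmem n))
end

section
/- For 0 ≤ r < 1 and w_max > w_max' > 0, the one-step update T(p) = w_max(1-r)p / (w_max(1-r)p + w_max'(1+r)(1-p)) satisfies T(p) > p for all p ∈ (0,1) if and only if r < (w_max - w_max')/(w_max + w_max'). -/
/-!
Write `A = wmax (1 - r)` and `B = wmax' (1 + r)`, both positive. Then
`T p - p = p (1 - p) (A - B) / (A p + B (1 - p))`, so `T` increases every interior `p`
exactly when `B < A`, and `B < A` rearranges to `r < (wmax - wmax') / (wmax + wmax')`.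
-/

open Set

noncomputable def selectionUpdate (A B p : ℝ) : ℝ :=
  A * p / (A * p + B * (1 - p))

lemma selectionUpdate_sub_self (A B p : ℝ) (hden : A * p + B * (1 - p) ≠ 0) :
    selectionUpdate A B p - p = p * (1 - p) * (A - B) / (A * p + B * (1 - p)) := by
  rw [selectionUpdate, eq_div_iff hden, sub_mul, div_mul_cancel₀ _ hden]
  ring

lemma lt_selectionUpdate_iff {A B p : ℝ} (hA : 0 < A) (hB : 0 < B) (hp : p ∈ Ioo 0 1) :
    p < selectionUpdate A B p ↔ B < A := by
  have hden : 0 < A * p + B * (1 - p) := by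
    have := hp.1; have := sub_pos.mpr hp.2; positivity
  have hpq : 0 < p * (1 - p) := mul_pos hp.1 (sub_pos.mpr hp.2)
  rw [← sub_pos, selectionUpdate_sub_self A B p hden.ne', div_pos_iff_of_pos_right hden,
    mul_pos_iff_of_pos_left hpq, sub_pos]

lemma forall_lt_selectionUpdate_iff {A B : ℝ} (hA : 0 < A) (hB : 0 < B) :
    (∀ p ∈ Ioo (0 : ℝ) 1, p < selectionUpdate A B p) ↔ B < A :=
  ⟨fun h ↦ (lt_selectionUpdate_iff hA hB ⟨one_half_pos, one_half_lt_one⟩).mp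
      (h _ ⟨one_half_pos, one_half_lt_one⟩),
    fun hBA _ hp ↦ (lt_selectionUpdate_iff hA hB hp).mpr hBA⟩

lemma mul_one_add_lt_mul_one_sub_iff {w w' r : ℝ} (hw : 0 < w + w') :
    w' * (1 + r) < w * (1 - r) ↔ r < (w - w') / (w + w') := by
  rw [lt_div_iff₀ hw]
  constructor <;> intro h <;> linarith

theorem stmt17 (wmax wmax' r : ℝ) (hr0 : 0 ≤ r) (hr1 : r < 1)
    (hw : wmax' < wmax) (hw' : 0 < wmax') :
    (∀ p ∈ Set.Ioo (0 : ℝ) 1,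
        wmax * (1 - r) * p /
            (wmax * (1 - r) * p + wmax' * (1 + r) * (1 - p)) > p) ↔
      r < (wmax - wmax') / (wmax + wmax') := by
  have hwmax : 0 < wmax := hw'.trans hw
  have hA : 0 < wmax * (1 - r) := mul_pos hwmax (sub_pos.mpr hr1)
  have hB : 0 < wmax' * (1 + r) := mul_pos hw' (by linarith)
  exact (forall_lt_selectionUpdate_iff hA hB).trans
    (mul_one_add_lt_mul_one_sub_iff (add_pos hwmax hw'))
end
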